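/- If a finite simplicial complex K admits a discrete Morse function whose only critical simplex is a single vertex, then K is collapsible. -/
import Mathlib


open Classical

/-- A finite abstract simplicial complex on vertex type `V`. -/
structure SComplex (V : Type) [DecidableEq V] where
  faces : Finset (Finset V)
  nonempty_of_mem : ∀ s ∈ faces, s.Nonempty
  down_closed : ∀ s ∈ faces, ∀ t, t ⊆ s → t.Nonempty → t ∈ faces

namespace SComplex

variable {V : Type} [DecidableEq V]

/-- The set entering the discrete-Morse condition at a simplex `σ`:
codimension-one faces `τ ⊂ σ` with `f τ ≥ f σ` together with
codimension-one cofaces `τ ⊃ σ` with `f τ ≤ f σ`. -/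
noncomputable def exitSet (K : SComplex V) (f : Finset V → ℝ) (σ : Finset V) :
    Finset (Finset V) :=
  K.faces.filter (fun τ =>
    (τ ⊆ σ ∧ τ.card + 1 = σ.card ∧ f σ ≤ f τ) ∨
    (σ ⊆ τ ∧ σ.card + 1 = τ.card ∧ f τ ≤ f σ))

/-- Forman's discrete Morse condition. -/
def IsDiscreteMorse (K : SComplex V) (f : Finset V → ℝ) : Prop :=
  ∀ σ ∈ K.faces, (K.exitSet f σ).card ≤ 1

def IsCritical (K : SComplex V) (f : Finset V → ℝ) (σ : Finset V) : Prop :=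
  σ ∈ K.faces ∧ K.exitSet f σ = ∅

noncomputable def critSet (K : SComplex V) (f : Finset V → ℝ) : Finset (Finset V) :=
  K.faces.filter (fun σ => K.exitSet f σ = ∅)

/-- total number of critical simplices of `f` -/
noncomputable def critCount (K : SComplex V) (f : Finset V → ℝ) : ℕ :=
  (K.critSet f).card

/-- number of critical `p`-simplices of `f` -/
noncomputable def critCountDim (K : SComplex V) (f : Finset V → ℝ) (p : ℕ) : ℕ :=
  ((K.critSet f).filter (fun σ => σ.card = p + 1)).card

/-- minimal Morse number -/
noncomputable def M (K : SComplex V) : ℕ :=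
  sInf {n | ∃ f, K.IsDiscreteMorse f ∧ K.critCount f = n}

/-- minimal number of critical `k`-simplices -/
noncomputable def mdim (K : SComplex V) (k : ℕ) : ℕ :=
  sInf {n | ∃ f, K.IsDiscreteMorse f ∧ K.critCountDim f k = n}

/-- `σ` is a free face of `τ`. -/
def IsFreePair (K : SComplex V) (σ τ : Finset V) : Prop :=
  σ ∈ K.faces ∧ τ ∈ K.faces ∧ σ ⊂ τ ∧ ∀ ρ ∈ K.faces, σ ⊂ ρ → ρ = τ

/-- `K'` is obtained from `K` by one elementary collapse. -/
def CollapseStep (K K' : SComplex V) : Prop :=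
  ∃ σ τ, K.IsFreePair σ τ ∧ K'.faces = K.faces \ {σ, τ}

def CollapsesTo (K L : SComplex V) : Prop :=
  Relation.ReflTransGen (fun A B => CollapseStep A B) K L

/-- the single-vertex complex -/
def pt (v : V) : SComplex V where
  faces := {{v}}
  nonempty_of_mem := by intro s hs; simp only [Finset.mem_singleton] at hs; subst hs; exact ⟨v, by simp⟩
  down_closed := by
    intro s hs t hts ht
    simp only [Finset.mem_singleton] at hs ⊢
    subst hs
    rcases (Finset.subset_singleton_iff.mp hts) with h | h
    · exact absurd h (Finset.nonempty_iff_ne_empty.mp ht)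
    · exact h

def Collapsible (K : SComplex V) : Prop := ∃ v : V, K.CollapsesTo (pt v)

/-- simple-homotopy equivalence: generated by elementary collapses and expansions -/
def SHEquiv (K L : SComplex V) : Prop :=
  Relation.ReflTransGen (fun A B => CollapseStep A B ∨ CollapseStep B A) K L

/-- a closed non-trivial V-path within a set of (codim-one) pairs -/
def HasClosedVPath (pairs : Set (Finset V × Finset V)) : Prop :=
  ∃ c : List (Finset V × Finset V), ∃ h : c ≠ [],
    (∀ p ∈ c, p ∈ pairs) ∧
    c.Chain' (fun p q => q.1 ⊆ p.2 ∧ q.1 ≠ p.1) ∧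
    (c.head h).1 ⊆ (c.getLast h).2 ∧ (c.head h).1 ≠ (c.getLast h).1

/-- a discrete vector field on `K` -/
structure DVField (K : SComplex V) where
  pairs : Finset (Finset V × Finset V)
  mem₁ : ∀ p ∈ pairs, p.1 ∈ K.faces
  mem₂ : ∀ p ∈ pairs, p.2 ∈ K.faces
  codim : ∀ p ∈ pairs, p.1 ⊆ p.2 ∧ p.1.card + 1 = p.2.card
  disj : ∀ p ∈ pairs, ∀ q ∈ pairs, p ≠ q →
      p.1 ≠ q.1 ∧ p.1 ≠ q.2 ∧ p.2 ≠ q.1 ∧ p.2 ≠ q.2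

/-- the gradient pairs of a discrete Morse function `f` -/
noncomputable def gradPairs (K : SComplex V) (f : Finset V → ℝ) :
    Finset (Finset V × Finset V) :=
  (K.faces ×ˢ K.faces).filter
    (fun p => p.1 ⊆ p.2 ∧ p.1.card + 1 = p.2.card ∧ f p.2 ≤ f p.1)

/-- the sublevel subcomplex `K_α` (Forman's `K(α)`). -/
noncomputable def sublevel (K : SComplex V) (f : Finset V → ℝ) (α : ℝ) : SComplex V where
  faces := K.faces.filter (fun σ => ∃ τ ∈ K.faces, f τ ≤ α ∧ σ ⊆ τ)
  nonempty_of_mem := fun s hs => K.nonempty_of_mem s (Finset.mem_filter.mp hs).1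
  down_closed := by
    intro s hs t hts ht
    rw [Finset.mem_filter] at hs ⊢
    obtain ⟨hsK, τ, hτ, hfτ, hsτ⟩ := hs
    exact ⟨K.down_closed s hsK t hts ht, τ, hτ, hfτ, hts.trans hsτ⟩

/-- a recorded sequence of elementary collapses from `K` to `L`,
listing the removed free pairs in order -/
inductive CollapseSeq : SComplex V → List (Finset V × Finset V) → SComplex V → Prop
  | nil (K : SComplex V) : CollapseSeq K [] K
  | cons {K K' L : SComplex V} {σ τ : Finset V} {l : List (Finset V × Finset V)} :
      K.IsFreePair σ τ → K'.faces = K.faces \ {σ, τ} →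
      CollapseSeq K' l L → CollapseSeq K ((σ, τ) :: l) L

/-- geometric realization of `K` inside `V → ℝ` -/
def realization [Fintype V] (K : SComplex V) : Set (V → ℝ) :=
  {x | (∀ v, 0 ≤ x v) ∧ (∑ v, x v) = 1 ∧ ∃ s ∈ K.faces, ∀ v, x v ≠ 0 → v ∈ s}

end SComplex

namespace SComplex

variable {V : Type} [DecidableEq V]

lemma faces_ext {K L : SComplex V} (h : K.faces = L.faces) : K = L := by
  cases K; cases L; simp_all

lemma mem_exitSet {K : SComplex V} {f : Finset V → ℝ} {σ τ : Finset V} :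
    τ ∈ K.exitSet f σ ↔ τ ∈ K.faces ∧
      ((τ ⊆ σ ∧ τ.card + 1 = σ.card ∧ f σ ≤ f τ) ∨
       (σ ⊆ τ ∧ σ.card + 1 = τ.card ∧ f τ ≤ f σ)) := by
  simp [exitSet]

lemma collapsesTo_of_aux : ∀ (n : ℕ) (K : SComplex V) (f : Finset V → ℝ) (v : V),
    K.faces.card = n → K.IsDiscreteMorse f → K.critSet f = {({v} : Finset V)} →
    K.CollapsesTo (pt v) := by
  intro n
  induction n using Nat.strong_induction_on with
  | _ n ih =>
    intro K f v hn hf hcrit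
    have hvK : ({v} : Finset V) ∈ K.faces := by
      have : ({v} : Finset V) ∈ K.critSet f := by rw [hcrit]; simp
      exact (Finset.mem_filter.mp this).1
    by_cases hgp : (K.gradPairs f).Nonempty
    · -- pick gradient pair maximizing f on the first component
      obtain ⟨⟨σ, τ⟩, hpmem, hpmax⟩ := (K.gradPairs f).exists_max_image (fun q => f q.1) hgp
      rw [gradPairs, Finset.mem_filter, Finset.mem_product] at hpmem
      obtain ⟨⟨hσK, hτK⟩, hστ, hcard, hfle⟩ := hpmem
      simp only at hσK hτK hστ hcard hfle
      have hmax : ∀ q ∈ K.gradPairs f, f q.1 ≤ f σ := hpmax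
      have hτexit : τ ∈ K.exitSet f σ :=
        mem_exitSet.mpr ⟨hτK, Or.inr ⟨hστ, hcard, hfle⟩⟩
      have hσexit : σ ∈ K.exitSet f τ :=
        mem_exitSet.mpr ⟨hσK, Or.inl ⟨hστ, hcard, hfle⟩⟩
      have hexσ : K.exitSet f σ = {τ} :=
        Finset.eq_singleton_iff_unique_mem.mpr
          ⟨hτexit, fun x hx => Finset.card_le_one.mp (hf σ hσK) x hx τ hτexit⟩
      have hexτ : K.exitSet f τ = {σ} :=
        Finset.eq_singleton_iff_unique_mem.mpr
          ⟨hσexit, fun x hx => Finset.card_le_one.mp (hf τ hτK) x hx σ hσexit⟩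
      have hσne : σ.Nonempty := K.nonempty_of_mem σ hσK
      have hσ1 : 1 ≤ σ.card := Finset.card_pos.mpr hσne
      -- no codimension-one coface of σ other than τ
      have hcof : ∀ ρ ∈ K.faces, σ ⊆ ρ → σ.card + 1 = ρ.card → ρ = τ := by
        intro ρ hρK hσρ hcρ
        by_contra hne
        have hflt : f σ < f ρ := by
          by_contra hle
          push_neg at hle
          have : ρ ∈ K.exitSet f σ := mem_exitSet.mpr ⟨hρK, Or.inr ⟨hσρ, hcρ, hle⟩⟩
          rw [hexσ, Finset.mem_singleton] at this
          exact hne this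
        -- ρ is not critical
        have hρnc : K.exitSet f ρ ≠ ∅ := by
          intro hempty
          have h1 : ρ ∈ K.critSet f := Finset.mem_filter.mpr ⟨hρK, hempty⟩
          rw [hcrit, Finset.mem_singleton] at h1
          have h2 : ρ.card = 1 := by rw [h1]; simp
          omega
        obtain ⟨χ, hχ⟩ := Finset.nonempty_iff_ne_empty.mpr hρnc
        rw [mem_exitSet] at hχ
        obtain ⟨hχK, hχcase⟩ := hχ
        rcases hχcase with ⟨h1, h2, h3⟩ | ⟨h1, h2, h3⟩
        · -- (χ, ρ) is a gradient pair with f χ ≥ f ρ > f σ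
          have hmem : (χ, ρ) ∈ K.gradPairs f := by
            rw [gradPairs, Finset.mem_filter, Finset.mem_product]
            exact ⟨⟨hχK, hρK⟩, h1, h2, h3⟩
          have hle := hmax (χ, ρ) hmem
          simp only at hle
          linarith
        · -- (ρ, χ) is a gradient pair with f ρ > f σ
          have hmem : (ρ, χ) ∈ K.gradPairs f := by
            rw [gradPairs, Finset.mem_filter, Finset.mem_product]
            exact ⟨⟨hρK, hχK⟩, h1, h2, h3⟩
          have hle := hmax (ρ, χ) hmem
          simp only at hle
          linarith
      -- σ is a free face of τ
      have hfree : ∀ ρ ∈ K.faces, σ ⊂ ρ → ρ = τ := by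
        intro ρ hρK hssρ
        have hsub := hssρ.subset
        have hlt : σ.card < ρ.card := Finset.card_lt_card hssρ
        by_cases hc : σ.card + 1 = ρ.card
        · exact hcof ρ hρK hsub hc
        · exfalso
          have hsd : (ρ \ σ).card = ρ.card - σ.card := Finset.card_sdiff_of_subset hsub
          have hge2 : 2 ≤ (ρ \ σ).card := by omega
          have hτσcard : (τ \ σ).card = 1 := by
            have := Finset.card_sdiff_of_subset hστ
            omega
          obtain ⟨t, ht⟩ := Finset.card_eq_one.mp hτσcard
          obtain ⟨u, hu, hut⟩ := Finset.exists_mem_ne (s := ρ \ σ) (by omega) t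
          have huρ : u ∈ ρ := (Finset.mem_sdiff.mp hu).1
          have huσ : u ∉ σ := (Finset.mem_sdiff.mp hu).2
          have hρ'sub : insert u σ ⊆ ρ := Finset.insert_subset huρ hsub
          have hρ'K : insert u σ ∈ K.faces :=
            K.down_closed ρ hρK _ hρ'sub ⟨u, Finset.mem_insert_self u σ⟩
          have hρ'card : σ.card + 1 = (insert u σ).card := by
            rw [Finset.card_insert_of_notMem huσ]
          have hρ'τ : insert u σ = τ := hcof _ hρ'K (Finset.subset_insert u σ) hρ'card
          have huτ : u ∈ τ := hρ'τ ▸ Finset.mem_insert_self u σ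
          have : u ∈ τ \ σ := Finset.mem_sdiff.mpr ⟨huτ, huσ⟩
          rw [ht, Finset.mem_singleton] at this
          exact hut this
      have hssτ : σ ⊂ τ := hστ.ssubset_of_ne (by intro h; rw [h] at hcard; omega)
      -- the collapsed complex
      have hdown : ∀ s ∈ K.faces \ {σ, τ}, ∀ t, t ⊆ s → t.Nonempty → t ∈ K.faces \ {σ, τ} := by
        intro s hs t hts htne
        rw [Finset.mem_sdiff] at hs
        obtain ⟨hsK, hsnot⟩ := hs
        simp only [Finset.mem_insert, Finset.mem_singleton] at hsnot
        push_neg at hsnot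
        have htK : t ∈ K.faces := K.down_closed s hsK t hts htne
        rw [Finset.mem_sdiff]
        refine ⟨htK, ?_⟩
        simp only [Finset.mem_insert, Finset.mem_singleton]
        push_neg
        constructor
        · intro h
          have hts' : σ ⊂ s := by
            rw [← h]
            exact hts.ssubset_of_ne (by rintro rfl; exact hsnot.1 h)
          exact hsnot.2 (hfree s hsK hts')
        · intro h
          have hts' : τ ⊂ s := by
            rw [← h]
            exact hts.ssubset_of_ne (by rintro rfl; exact hsnot.2 h)
          exact hsnot.2 (hfree s hsK (hssτ.trans hts'))
      set K' : SComplex V := ⟨K.faces \ {σ, τ},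
        fun s hs => K.nonempty_of_mem s (Finset.mem_sdiff.mp hs).1, hdown⟩ with hK'def
      have hK'faces : K'.faces = K.faces \ {σ, τ} := rfl
      have hcardlt : K'.faces.card < K.faces.card := by
        apply Finset.card_lt_card
        rw [hK'faces]
        refine ⟨Finset.sdiff_subset, fun hsub => ?_⟩
        have := hsub hσK
        rw [Finset.mem_sdiff] at this
        exact this.2 (by simp)
      -- exit sets don't change for surviving faces
      have hexit_eq : ∀ μ ∈ K'.faces, K'.exitSet f μ = K.exitSet f μ := by
        intro μ hμ
        rw [hK'faces, Finset.mem_sdiff] at hμ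
        obtain ⟨hμK, hμnot⟩ := hμ
        simp only [Finset.mem_insert, Finset.mem_singleton] at hμnot
        push_neg at hμnot
        apply Finset.ext
        intro χ
        rw [mem_exitSet, mem_exitSet, hK'faces, Finset.mem_sdiff]
        constructor
        · rintro ⟨⟨h1, _⟩, h2⟩; exact ⟨h1, h2⟩
        · rintro ⟨hχK, hcase⟩
          refine ⟨⟨hχK, ?_⟩, hcase⟩
          simp only [Finset.mem_insert, Finset.mem_singleton]
          push_neg
          constructor
          · -- χ ≠ σ
            intro heq
            rw [heq] at hcase
            rcases hcase with ⟨h1, h2, h3⟩ | ⟨h1, h2, h3⟩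
            · -- σ ⊆ μ codim 1 : μ is a coface of σ, so μ = τ
              have hσssμ : σ ⊂ μ := h1.ssubset_of_ne (by intro h; rw [h] at h2; omega)
              exact hμnot.2 (hfree μ hμK hσssμ)
            · -- μ ⊆ σ codim 1 with f σ ≤ f μ : μ ∈ exitSet σ = {τ}
              have hμτ : μ ∈ K.exitSet f σ := mem_exitSet.mpr ⟨hμK, Or.inl ⟨h1, h2, h3⟩⟩
              rw [hexσ, Finset.mem_singleton] at hμτ
              exact hμnot.2 hμτ
          · -- χ ≠ τ
            intro heq
            rw [heq] at hcase
            rcases hcase with ⟨h1, h2, h3⟩ | ⟨h1, h2, h3⟩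
            · -- τ ⊆ μ codim 1 : σ ⊂ μ so μ = τ, contradiction with cards
              have hssμ : τ ⊂ μ := h1.ssubset_of_ne (by intro h; rw [h] at h2; omega)
              have hμτ : μ = τ := hfree μ hμK (hssτ.trans hssμ)
              exact hssμ.ne' hμτ
            · -- μ ⊆ τ codim 1 with f τ ≤ f μ : μ ∈ exitSet τ = {σ}
              have hμσ : μ ∈ K.exitSet f τ := mem_exitSet.mpr ⟨hμK, Or.inl ⟨h1, h2, h3⟩⟩
              rw [hexτ, Finset.mem_singleton] at hμσ
              exact hμnot.1 hμσ
      have hf' : K'.IsDiscreteMorse f := by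
        intro μ hμ
        rw [hexit_eq μ hμ]
        exact hf μ ((Finset.mem_sdiff.mp (hK'faces ▸ hμ)).1)
      have hvσ : ({v} : Finset V) ≠ σ := by
        intro h
        have hm : ({v} : Finset V) ∈ K.critSet f := by rw [hcrit]; simp
        have hempty := (Finset.mem_filter.mp hm).2
        rw [h, hexσ] at hempty
        simp at hempty
      have hvτ : ({v} : Finset V) ≠ τ := by
        intro h
        have hm : ({v} : Finset V) ∈ K.critSet f := by rw [hcrit]; simp
        have hempty := (Finset.mem_filter.mp hm).2
        rw [h, hexτ] at hempty
        simp at hempty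
      have hvK' : ({v} : Finset V) ∈ K'.faces := by
        rw [hK'faces, Finset.mem_sdiff]
        exact ⟨hvK, by simp [hvσ, hvτ]⟩
      have hcrit' : K'.critSet f = {({v} : Finset V)} := by
        apply Finset.ext
        intro μ
        rw [Finset.mem_singleton]
        constructor
        · intro hμ
          rw [critSet, Finset.mem_filter] at hμ
          obtain ⟨hμK', hμempty⟩ := hμ
          rw [hexit_eq μ hμK'] at hμempty
          have hμK : μ ∈ K.faces := (Finset.mem_sdiff.mp (hK'faces ▸ hμK')).1
          have hm : μ ∈ K.critSet f := Finset.mem_filter.mpr ⟨hμK, hμempty⟩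
          rw [hcrit, Finset.mem_singleton] at hm
          exact hm
        · rintro rfl
          rw [critSet, Finset.mem_filter]
          refine ⟨hvK', ?_⟩
          rw [hexit_eq _ hvK']
          have hm : ({v} : Finset V) ∈ K.critSet f := by rw [hcrit]; simp
          exact (Finset.mem_filter.mp hm).2
      have htail := ih K'.faces.card (hn ▸ hcardlt) K' f v rfl hf' hcrit'
      exact Relation.ReflTransGen.head ⟨σ, τ, ⟨hσK, hτK, hssτ, hfree⟩, hK'faces⟩ htail
    · -- no gradient pairs: all faces critical, so K = pt v
      have hall : K.faces = {({v} : Finset V)} := by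
        rw [← hcrit]
        apply Finset.Subset.antisymm
        · intro μ hμ
          rw [critSet, Finset.mem_filter]
          refine ⟨hμ, ?_⟩
          by_contra hne
          obtain ⟨χ, hχ⟩ := Finset.nonempty_iff_ne_empty.mpr hne
          rw [mem_exitSet] at hχ
          obtain ⟨hχK, hcase⟩ := hχ
          apply hgp
          rcases hcase with ⟨h1, h2, h3⟩ | ⟨h1, h2, h3⟩
          · refine ⟨(χ, μ), ?_⟩
            rw [gradPairs, Finset.mem_filter, Finset.mem_product]
            exact ⟨⟨hχK, hμ⟩, h1, h2, h3⟩
          · refine ⟨(μ, χ), ?_⟩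
            rw [gradPairs, Finset.mem_filter, Finset.mem_product]
            exact ⟨⟨hμ, hχK⟩, h1, h2, h3⟩
        · intro x hx
          exact (Finset.mem_filter.mp hx).1
      have hKpt : K = pt v := faces_ext (by rw [hall]; rfl)
      rw [hKpt]
      exact Relation.ReflTransGen.refl

end SComplex

/-- a finite simplicial complex admitting a discrete Morse
function whose only critical simplex is a single vertex is collapsible. -/
theorem collapsible_of_single_critical_vertex {V : Type} [DecidableEq V]
    (K : SComplex V) (f : Finset V → ℝ) (v : V)
    (hf : K.IsDiscreteMorse f)
    (hcrit : K.critSet f = {({v} : Finset V)}) :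
    K.Collapsible :=
  ⟨v, SComplex.collapsesTo_of_aux K.faces.card K f v rfl hf hcrit⟩
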